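/- arXiv:2505.11501 — 5 statements merged into one kernel-verified Lean document; each statement's English description precedes it below -/
import Mathlib

section
/- Let n ≥ 1 and let M be a real n×n matrix. Let S = (1/2)(M + Mᵀ) be its symmetric part, and let x_m and x_M denote respectively the smallest and the largest eigenvalue of the real symmetric matrix S. Then every complex eigenvalue z of M satisfies x_m ≤ Re z ≤ x_M. -/
/-!
If `M v = z v` with `v = a + i b ≠ 0`, then taking real parts in `v* M v = z ‖v‖²` gives
`Re z (‖a‖² + ‖b‖²) = aᵀ M a + bᵀ M b = aᵀ S a + bᵀ S b`, since a real quadratic form only sees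
the symmetric part of its matrix. The Rayleigh bounds `x_m ‖x‖² ≤ xᵀ S x ≤ x_M ‖x‖²`, which hold
because `S - x_m` and `x_M - S` are positive semidefinite, then squeeze `Re z` between `x_m`
and `x_M`.
-/

open Matrix
open scoped ComplexOrder

namespace Matrix.IsHermitian

variable {𝕜 n : Type*} [RCLike 𝕜] [Fintype n] [DecidableEq n] {A : Matrix n n 𝕜}

lemma posSemidef_smul_add_smul_one (hA : A.IsHermitian) {a c : ℝ}
    (h : ∀ i, 0 ≤ a * hA.eigenvalues i + c) : (a • A + c • (1 : Matrix n n 𝕜)).PosSemidef := by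
  have hdiag : a • diagonal (RCLike.ofReal ∘ hA.eigenvalues) + c • (1 : Matrix n n 𝕜) =
      diagonal fun i ↦ ((a * hA.eigenvalues i + c : ℝ) : 𝕜) := by
    ext i j; by_cases hij : i = j <;> simp [hij, RCLike.real_smul_eq_coe_mul]
  have hconj : a • A + c • (1 : Matrix n n 𝕜) = (hA.eigenvectorUnitary : Matrix n n 𝕜) *
      (diagonal fun i ↦ ((a * hA.eigenvalues i + c : ℝ) : 𝕜)) *
      star (hA.eigenvectorUnitary : Matrix n n 𝕜) := by
    conv_lhs => rw [hA.spectral_theorem, Unitary.conjStarAlgAut_apply]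
    rw [← hdiag, mul_add, add_mul, mul_smul_comm, smul_mul_assoc, mul_smul_comm, smul_mul_assoc,
      mul_one, mem_unitaryGroup_iff.mp hA.eigenvectorUnitary.2]
  rw [hconj, Unitary.isUnit_coe.posSemidef_star_right_conjugate_iff, posSemidef_diagonal_iff]
  exact fun i ↦ RCLike.ofReal_nonneg.mpr (h i)

lemma mul_re_dotProduct_le (hA : A.IsHermitian) {c : ℝ} (hc : ∀ i, c ≤ hA.eigenvalues i)
    (x : n → 𝕜) : c * RCLike.re (star x ⬝ᵥ x) ≤ RCLike.re (star x ⬝ᵥ A *ᵥ x) := by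
  have hpsd := (hA.posSemidef_smul_add_smul_one (a := 1) (c := -c)
    fun i ↦ by linarith [hc i]).re_dotProduct_nonneg x
  simp only [add_mulVec, smul_mulVec, one_mulVec, dotProduct_add, dotProduct_smul, map_add,
    RCLike.smul_re] at hpsd
  linarith

lemma re_dotProduct_le_mul (hA : A.IsHermitian) {c : ℝ} (hc : ∀ i, hA.eigenvalues i ≤ c)
    (x : n → 𝕜) : RCLike.re (star x ⬝ᵥ A *ᵥ x) ≤ c * RCLike.re (star x ⬝ᵥ x) := by
  have hpsd := (hA.posSemidef_smul_add_smul_one (a := -1) (c := c)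
    fun i ↦ by linarith [hc i]).re_dotProduct_nonneg x
  simp only [add_mulVec, smul_mulVec, one_mulVec, dotProduct_add, dotProduct_smul, map_add,
    RCLike.smul_re] at hpsd
  linarith

end Matrix.IsHermitian

namespace Matrix

variable {n : Type*} [Fintype n]

lemma exists_mulVec_eq_smul_of_mem_spectrum {K : Type*} [Field K] [DecidableEq n]
    {M : Matrix n n K} {z : K} (hz : z ∈ spectrum K M) : ∃ v ≠ 0, M *ᵥ v = z • v := by
  rw [← spectrum_toLin', ← Module.End.hasEigenvalue_iff_mem_spectrum] at hz
  obtain ⟨v, hv⟩ := hz.exists_hasEigenvector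
  exact ⟨v, hv.2, hv.apply_eq_smul⟩

lemma dotProduct_mulVec_symmPart {K : Type*} [Field K] [NeZero (2 : K)] (M : Matrix n n K)
    (x : n → K) : x ⬝ᵥ ((1 / 2 : K) • (M + Mᵀ)) *ᵥ x = x ⬝ᵥ M *ᵥ x := by
  rw [smul_mulVec, add_mulVec, dotProduct_smul, dotProduct_add, dotProduct_transpose_mulVec,
    smul_eq_mul, ← two_mul, one_div, inv_mul_cancel_left₀ two_ne_zero]

lemma re_star_dotProduct_map_ofReal_mulVec (M : Matrix n n ℝ) (v : n → ℂ) :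
    (star v ⬝ᵥ M.map Complex.ofReal *ᵥ v).re =
      (fun i ↦ (v i).re) ⬝ᵥ M *ᵥ (fun i ↦ (v i).re) +
        (fun i ↦ (v i).im) ⬝ᵥ M *ᵥ (fun i ↦ (v i).im) := by
  simp only [dotProduct, mulVec, map_apply, Complex.re_sum, Finset.mul_sum,
    ← Finset.sum_add_distrib]
  refine Finset.sum_congr rfl fun i _ ↦ Finset.sum_congr rfl fun j _ ↦ ?_
  simp only [Pi.star_apply, Complex.star_def, Complex.mul_re, Complex.mul_im, Complex.conj_re,
    Complex.conj_im, Complex.ofReal_re, Complex.ofReal_im]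
  ring

end Matrix

/-- **Bendixson inequalities.** For a real `n × n` matrix `M` (`n ≥ 1`) with symmetric
part `S = (1/2)(M + Mᵀ)`, every complex eigenvalue `z` of (the complexification of) `M`
satisfies `x_m ≤ Re z ≤ x_M`, where `x_m, x_M` are the smallest and largest
eigenvalues of the real symmetric matrix `S`. -/
theorem bendixson_inequalities (n : ℕ) (hn : 1 ≤ n) (M : Matrix (Fin n) (Fin n) ℝ)
    (S : Matrix (Fin n) (Fin n) ℝ) (hSdef : S = (1 / 2 : ℝ) • (M + Mᵀ))
    (hS : S.IsHermitian)
    (z : ℂ) (hz : z ∈ spectrum ℂ (M.map Complex.ofReal)) :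
    Finset.univ.inf' ⟨⟨0, hn⟩, Finset.mem_univ _⟩ hS.eigenvalues ≤ z.re ∧
      z.re ≤ Finset.univ.sup' ⟨⟨0, hn⟩, Finset.mem_univ _⟩ hS.eigenvalues := by
  obtain ⟨v, hv, hMv⟩ := exists_mulVec_eq_smul_of_mem_spectrum hz
  set a : Fin n → ℝ := fun i ↦ (v i).re
  set b : Fin n → ℝ := fun i ↦ (v i).im
  have hnorm : (star v ⬝ᵥ v).re = a ⬝ᵥ a + b ⬝ᵥ b := by
    simpa using re_star_dotProduct_map_ofReal_mulVec 1 v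
  obtain ⟨hnorm_pos, hnorm_real⟩ := Complex.pos_iff.mp (dotProduct_star_self_pos_iff.mpr hv)
  have hre : z.re * (a ⬝ᵥ a + b ⬝ᵥ b) = a ⬝ᵥ S *ᵥ a + b ⬝ᵥ S *ᵥ b := by
    rw [hSdef, dotProduct_mulVec_symmPart, dotProduct_mulVec_symmPart,
      ← re_star_dotProduct_map_ofReal_mulVec, hMv, dotProduct_smul, smul_eq_mul, Complex.mul_re,
      ← hnorm_real, mul_zero, sub_zero, hnorm]
  set xm := Finset.univ.inf' ⟨⟨0, hn⟩, Finset.mem_univ _⟩ hS.eigenvalues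
  set xM := Finset.univ.sup' ⟨⟨0, hn⟩, Finset.mem_univ _⟩ hS.eigenvalues
  have lower (x : Fin n → ℝ) : xm * (x ⬝ᵥ x) ≤ x ⬝ᵥ S *ᵥ x := by
    simpa using hS.mul_re_dotProduct_le (c := xm) (fun i ↦ Finset.inf'_le _ (Finset.mem_univ i)) x
  have upper (x : Fin n → ℝ) : x ⬝ᵥ S *ᵥ x ≤ xM * (x ⬝ᵥ x) := by
    simpa using hS.re_dotProduct_le_mul (c := xM) (fun i ↦ Finset.le_sup' _ (Finset.mem_univ i)) x
  rw [hnorm] at hnorm_pos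
  constructor
  · refine le_of_mul_le_mul_right ?_ hnorm_pos
    linarith [lower a, lower b]
  · refine le_of_mul_le_mul_right ?_ hnorm_pos
    linarith [upper a, upper b]
end

section
/- Let N ≥ 1, let A be a real N×N matrix with Aᵀ = −A, and let γ : Fin N → ℝ with γ_j ≥ 0 for all j. Set 𝕃 = A − diagonal(2γ). If λ_1, …, λ_n are complex eigenvalues of 𝕃 (each λ_k in the spectrum of the complexification of 𝕃), then 2n · min_j γ_j ≤ −Σ_{k=1}^{n} Re λ_k ≤ 2n · max_j γ_j. -/
open Matrix

private lemma eig_vec {n : ℕ} (M : Matrix (Fin n) (Fin n) ℂ) (z : ℂ) (h : z ∈ spectrum ℂ M) :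
    ∃ v, v ≠ 0 ∧ M *ᵥ v = z • v := by
  rw [spectrum.mem_iff] at h
  have hdet : ((algebraMap ℂ (Matrix (Fin n) (Fin n) ℂ) z) - M).det = 0 := by
    by_contra hd
    exact h ((Matrix.isUnit_iff_isUnit_det _).2 (isUnit_iff_ne_zero.2 hd))
  obtain ⟨v, hv0, hveq⟩ := (Matrix.exists_mulVec_eq_zero_iff).2 hdet
  refine ⟨v, hv0, ?_⟩
  have h1 : (algebraMap ℂ (Matrix (Fin n) (Fin n) ℂ) z) *ᵥ v - M *ᵥ v = 0 := by
    rw [← Matrix.sub_mulVec]; exact hveq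
  have h2 : (algebraMap ℂ (Matrix (Fin n) (Fin n) ℂ) z) *ᵥ v = z • v := by
    rw [Matrix.algebraMap_eq_diagonal]
    ext i
    simp [Matrix.mulVec_diagonal]
  rw [h2, sub_eq_zero] at h1
  exact h1.symm

private lemma re_bound {N : ℕ} (A : Matrix (Fin N) (Fin N) ℝ) (hA : Aᵀ = -A)
    (γ : Fin N → ℝ) (z : ℂ)
    (hz : z ∈ spectrum ℂ ((A - Matrix.diagonal (fun j => 2 * γ j)).map Complex.ofReal))
    (m M : ℝ) (hm : ∀ j, m ≤ γ j) (hM : ∀ j, γ j ≤ M) :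
    2 * m ≤ -z.re ∧ -z.re ≤ 2 * M := by
  obtain ⟨v, hv0, hMv⟩ := eig_vec _ z hz
  have hAij : ∀ i j, A i j = - A j i := by
    intro i j
    have := congrFun (congrFun hA j) i
    simpa [Matrix.transpose_apply] using this
  have hsplit : (A - Matrix.diagonal (fun j => 2 * γ j)).map Complex.ofReal
      = A.map Complex.ofReal - Matrix.diagonal (fun j => ((2 * γ j : ℝ) : ℂ)) := by
    ext i j
    by_cases h : i = j <;>
      simp [Matrix.map_apply, Matrix.sub_apply, Matrix.diagonal_apply, h]
  rw [hsplit, Matrix.sub_mulVec] at hMv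
  have hAv : ∀ j, (A.map Complex.ofReal *ᵥ v) j = z * v j + ((2 * γ j : ℝ) : ℂ) * v j := by
    intro j
    have h := congrFun hMv j
    simp only [Pi.sub_apply, Pi.smul_apply, smul_eq_mul] at h
    have hd : (Matrix.diagonal (fun j => ((2 * γ j : ℝ) : ℂ)) *ᵥ v) j
        = ((2 * γ j : ℝ) : ℂ) * v j := by
      simp [Matrix.mulVec_diagonal]
    rw [hd] at h
    linear_combination h
  set TA : ℂ := ∑ j, ∑ i, (starRingEnd ℂ) (v j) * ((A j i : ℝ) : ℂ) * v i with hTAdef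
  have hTAeq : TA = ∑ j, (starRingEnd ℂ) (v j) * (A.map Complex.ofReal *ᵥ v) j := by
    rw [hTAdef]
    refine Finset.sum_congr rfl fun j _ => ?_
    rw [Matrix.mulVec, dotProduct, Finset.mul_sum]
    refine Finset.sum_congr rfl fun i _ => ?_
    rw [Matrix.map_apply, mul_assoc]
  have hskew : (starRingEnd ℂ) TA = -TA := by
    rw [hTAdef]
    simp only [map_sum, _root_.map_mul, Complex.conj_conj, Complex.conj_ofReal]
    rw [Finset.sum_comm, ← Finset.sum_neg_distrib]
    refine Finset.sum_congr rfl fun a _ => ?_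
    rw [← Finset.sum_neg_distrib]
    refine Finset.sum_congr rfl fun b _ => ?_
    have hc : ((A a b : ℝ) : ℂ) = -((A b a : ℝ) : ℂ) := by
      rw [hAij a b]; push_cast; ring
    linear_combination ((starRingEnd ℂ) (v a) * v b) * hc
  have hre0 : TA.re = 0 := by
    have h := congrArg Complex.re hskew
    simp only [Complex.conj_re, Complex.neg_re] at h
    linarith
  have hTA2 : TA = z * ((∑ j, Complex.normSq (v j) : ℝ) : ℂ)
      + ((∑ j, 2 * γ j * Complex.normSq (v j) : ℝ) : ℂ) := by
    rw [hTAeq]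
    push_cast
    rw [Finset.mul_sum, ← Finset.sum_add_distrib]
    refine Finset.sum_congr rfl fun j _ => ?_
    rw [hAv j]
    have hns : (starRingEnd ℂ) (v j) * v j = ((Complex.normSq (v j) : ℝ) : ℂ) := by
      rw [mul_comm, Complex.mul_conj]
    calc (starRingEnd ℂ) (v j) * (z * v j + ((2 * γ j : ℝ) : ℂ) * v j)
        = (z + ((2 * γ j : ℝ) : ℂ)) * ((starRingEnd ℂ) (v j) * v j) := by ring
      _ = z * ((Complex.normSq (v j) : ℝ) : ℂ)
          + ((2 : ℝ) : ℂ) * ((γ j : ℝ) : ℂ) * ((Complex.normSq (v j) : ℝ) : ℂ) := by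
        rw [hns]; push_cast; ring
  have hre : z.re * (∑ j, Complex.normSq (v j)) + (∑ j, 2 * γ j * Complex.normSq (v j)) = 0 := by
    have h := congrArg Complex.re hTA2
    rw [hre0] at h
    simp only [Complex.add_re, Complex.mul_re, Complex.ofReal_re, Complex.ofReal_im,
      mul_zero, sub_zero] at h
    linarith
  have hSpos : 0 < ∑ j, Complex.normSq (v j) := by
    obtain ⟨j, hj⟩ := Function.ne_iff.mp hv0
    exact Finset.sum_pos' (fun i _ => Complex.normSq_nonneg _)
      ⟨j, Finset.mem_univ j, Complex.normSq_pos.2 hj⟩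
  have hlo : 2 * m * (∑ j, Complex.normSq (v j)) ≤ ∑ j, 2 * γ j * Complex.normSq (v j) := by
    rw [Finset.mul_sum]
    refine Finset.sum_le_sum fun j _ => ?_
    nlinarith [hm j, Complex.normSq_nonneg (v j)]
  have hhi : (∑ j, 2 * γ j * Complex.normSq (v j)) ≤ 2 * M * (∑ j, Complex.normSq (v j)) := by
    rw [Finset.mul_sum]
    refine Finset.sum_le_sum fun j _ => ?_
    nlinarith [hM j, Complex.normSq_nonneg (v j)]
  constructor
  · have h2 : 2 * m * (∑ j, Complex.normSq (v j)) ≤ -z.re * (∑ j, Complex.normSq (v j)) := by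
      nlinarith
    exact le_of_mul_le_mul_right h2 hSpos
  · have h2 : -z.re * (∑ j, Complex.normSq (v j)) ≤ 2 * M * (∑ j, Complex.normSq (v j)) := by
      nlinarith
    exact le_of_mul_le_mul_right h2 hSpos

/-- **Bounds on the relaxation rate in a sector without interlayer gauge flips.**
For a real antisymmetric `A` and nonnegative dissipation strengths `γ`, with
`𝕃 = A - diagonal (2γ)`, any `n` complex eigenvalues `λ_1, …, λ_n` of `𝕃`
satisfy `2n·min_j γ j ≤ -Σ_k Re λ_k ≤ 2n·max_j γ j`. -/
theorem relaxation_rate_bounds_no_flips (N : ℕ) (hN : 1 ≤ N)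
    (A : Matrix (Fin N) (Fin N) ℝ) (hA : Aᵀ = -A)
    (γ : Fin N → ℝ) (hγ : ∀ j, 0 ≤ γ j)
    (n : ℕ) (lam : Fin n → ℂ)
    (hlam : ∀ k, lam k ∈
      spectrum ℂ ((A - Matrix.diagonal (fun j => 2 * γ j)).map Complex.ofReal)) :
    2 * n * Finset.univ.inf' ⟨⟨0, hN⟩, Finset.mem_univ _⟩ γ ≤ -∑ k, (lam k).re ∧
      -∑ k, (lam k).re ≤ 2 * n * Finset.univ.sup' ⟨⟨0, hN⟩, Finset.mem_univ _⟩ γ := by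
  set m := Finset.univ.inf' ⟨⟨0, hN⟩, Finset.mem_univ _⟩ γ with hm
  set Mx := Finset.univ.sup' ⟨⟨0, hN⟩, Finset.mem_univ _⟩ γ with hMx
  have key : ∀ k, 2 * m ≤ -(lam k).re ∧ -(lam k).re ≤ 2 * Mx := fun k =>
    re_bound A hA γ (lam k) (hlam k) m Mx
      (fun j => Finset.inf'_le γ (Finset.mem_univ j))
      (fun j => Finset.le_sup' γ (Finset.mem_univ j))
  have hsum : -∑ k, (lam k).re = ∑ k, -(lam k).re := by
    rw [Finset.sum_neg_distrib]
  rw [hsum]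
  constructor
  · have h := Finset.card_nsmul_le_sum Finset.univ (fun k => -(lam k).re) (2 * m)
      (fun k _ => (key k).1)
    simp only [Finset.card_univ, Fintype.card_fin, nsmul_eq_mul] at h
    have he : 2 * (n : ℝ) * m = (n : ℝ) * (2 * m) := by ring
    linarith
  · have h := Finset.sum_le_card_nsmul Finset.univ (fun k => -(lam k).re) (2 * Mx)
      (fun k _ => (key k).2)
    simp only [Finset.card_univ, Fintype.card_fin, nsmul_eq_mul] at h
    have he : 2 * (n : ℝ) * Mx = (n : ℝ) * (2 * Mx) := by ring
    linarith
end

section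
/- Let n be a natural number, let A, B, D be real n×n matrices, and let M be the complex 2n×2n block matrix M = [[A_ℂ, i·D_ℂ], [−i·D_ℂ, B_ℂ]] (i.e., Matrix.fromBlocks applied to the complexifications A_ℂ, B_ℂ, D_ℂ of A, B, D, indexed by Fin n ⊕ Fin n). Then the spectrum of M is invariant under complex conjugation: a complex number z is an eigenvalue of M if and only if its complex conjugate z̄ is an eigenvalue of M. -/
open Matrix

lemma mem_spec_iff_det {m : Type*} [Fintype m] [DecidableEq m]
    (N : Matrix m m ℂ) (w : ℂ) :
    w ∈ spectrum ℂ N ↔ (w • (1 : Matrix m m ℂ) - N).det = 0 := by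
  rw [spectrum.mem_iff, Matrix.isUnit_iff_isUnit_det, isUnit_iff_ne_zero, not_not,
    Algebra.algebraMap_eq_smul_one]

/-- **Conjugation symmetry of the spectrum of the vectorized Lindbladian.**
For real `n × n` matrices `A`, `B`, `D`, the complex block matrix
`M = [[A_ℂ, i·D_ℂ], [-i·D_ℂ, B_ℂ]]` has a spectrum invariant under complex
conjugation: `z` is an eigenvalue of `M` iff `z̄` is. -/
theorem spectrum_conj_invariant_fromBlocks (n : ℕ)
    (A B D : Matrix (Fin n) (Fin n) ℝ)
    (M : Matrix (Fin n ⊕ Fin n) (Fin n ⊕ Fin n) ℂ)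
    (hM : M = Matrix.fromBlocks (A.map Complex.ofReal)
      (Complex.I • D.map Complex.ofReal)
      ((-Complex.I) • D.map Complex.ofReal) (B.map Complex.ofReal))
    (z : ℂ) :
    z ∈ spectrum ℂ M ↔ (starRingEnd ℂ) z ∈ spectrum ℂ M := by
  set S : Matrix (Fin n ⊕ Fin n) (Fin n ⊕ Fin n) ℂ :=
    Matrix.fromBlocks 1 0 0 (-1) with hSdef
  have hS : S * S = 1 := by
    simp [hSdef, Matrix.fromBlocks_multiply, ← Matrix.fromBlocks_one]
  have hdetS : S.det * S.det = 1 := by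
    rw [← Matrix.det_mul, hS, Matrix.det_one]
  have hconj : M.map (starRingEnd ℂ) = S * M * S := by
    subst hM
    ext (i | i) (j | j) <;>
      simp [hSdef, Matrix.fromBlocks_multiply, Matrix.map_map, Function.comp,
        Complex.conj_ofReal, Matrix.fromBlocks_map, Matrix.map_smul, mul_comm]
  have key : ∀ w : ℂ, ((starRingEnd ℂ) w • (1 : Matrix (Fin n ⊕ Fin n) (Fin n ⊕ Fin n) ℂ) - M).det
      = (starRingEnd ℂ) ((w • (1 : Matrix (Fin n ⊕ Fin n) (Fin n ⊕ Fin n) ℂ) - M).det) * (S.det * S.det) := by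
    intro w
    have h1 : ((starRingEnd ℂ) w • (1 : Matrix (Fin n ⊕ Fin n) (Fin n ⊕ Fin n) ℂ) - M)
        = S * ((w • 1 - M).map (starRingEnd ℂ)) * S := by
      have : (w • (1 : Matrix (Fin n ⊕ Fin n) (Fin n ⊕ Fin n) ℂ) - M).map (starRingEnd ℂ)
          = (starRingEnd ℂ) w • 1 - M.map (starRingEnd ℂ) := by
        ext i j
        simp [Matrix.one_apply, apply_ite]
      rw [this, hconj]
      rw [mul_sub, sub_mul, mul_smul_comm, smul_mul_assoc, mul_one, hS]
      have h2 : S * (S * M * S) * S = (S * S) * M * (S * S) := by noncomm_ring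
      rw [h2, hS, one_mul, mul_one]
    rw [h1, Matrix.det_mul, Matrix.det_mul,
      show ((w • 1 - M).map ⇑(starRingEnd ℂ)) = (starRingEnd ℂ).mapMatrix (w • 1 - M) from rfl,
      RingHom.map_det]
    ring
  rw [mem_spec_iff_det, mem_spec_iff_det, key z, hdetS, mul_one,
    map_eq_zero_iff _ (starRingEnd ℂ).injective]
end

section
/- Let S and ρ be complex n×n matrices with S unitary (Sᴴ·S = I = S·Sᴴ) and trace(ρ) ≠ 0. Suppose S·ρ = s·ρ and ρ·Sᴴ = t·ρ for complex numbers s and t. Then s·t = 1 and |s| = 1; consequently t = conj(s). -/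
/-!
Conjugating by the unitary `S` preserves the trace, so `trace ρ = trace (S ρ Sᴴ) = s t · trace ρ`,
and it preserves the Hilbert–Schmidt form `ρᴴ ρ`, so `ρᴴ ρ = (Sρ)ᴴ (Sρ) = |s|² · ρᴴ ρ`.
A traceful `ρ` is nonzero, hence `s t = 1 = conj s · s`, which forces `t = conj s`.
-/

open Matrix
open scoped ComplexOrder

namespace Matrix

variable {m R : Type*} [Fintype m] [DecidableEq m]

theorem mul_eq_one_of_mul_eq_smul_of_trace_ne_zero [CommRing R] [IsDomain R]
    {S T ρ : Matrix m m R} {s t : R} (hTS : T * S = 1)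
    (hs : S * ρ = s • ρ) (ht : ρ * T = t • ρ) (htr : ρ.trace ≠ 0) : s * t = 1 := by
  have h : (s * t) * ρ.trace = 1 * ρ.trace :=
    calc (s * t) * ρ.trace = (S * ρ * T).trace := by
          rw [hs, smul_mul_assoc, ht, smul_smul, trace_smul, smul_eq_mul]
      _ = ρ.trace := by rw [trace_mul_cycle, hTS, one_mul]
      _ = 1 * ρ.trace := (one_mul _).symm
  exact mul_right_cancel₀ htr h

theorem star_mul_self_eq_one_of_mul_eq_smul [CommRing R] [IsDomain R] [PartialOrder R]
    [StarRing R] [StarOrderedRing R] {S ρ : Matrix m m R} {s : R} (hS : Sᴴ * S = 1)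
    (hρ : ρ ≠ 0) (hs : S * ρ = s • ρ) : star s * s = 1 := by
  have h : (star s * s) • (ρᴴ * ρ) = (1 : R) • (ρᴴ * ρ) :=
    calc (star s * s) • (ρᴴ * ρ) = (S * ρ)ᴴ * (S * ρ) := by
          rw [hs, conjTranspose_smul, smul_mul_smul_comm]
      _ = ρᴴ * ρ := by rw [conjTranspose_mul, mul_assoc, ← mul_assoc Sᴴ, hS, one_mul]
      _ = (1 : R) • (ρᴴ * ρ) := (one_smul _ _).symm
  exact smul_left_injective R (conjTranspose_mul_self_eq_zero.not.mpr hρ) h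

end Matrix

theorem traceful_eigenoperator_diagonal_sector_general (n : ℕ)
    (S ρ : Matrix (Fin n) (Fin n) ℂ)
    (hU1 : Sᴴ * S = 1)
    (htr : ρ.trace ≠ 0) (s t : ℂ)
    (hs : S * ρ = s • ρ) (ht : ρ * Sᴴ = t • ρ) :
    s * t = 1 ∧ ‖s‖ = 1 ∧ t = (starRingEnd ℂ) s := by
  have hst : s * t = 1 := mul_eq_one_of_mul_eq_smul_of_trace_ne_zero hU1 hs ht htr
  have hρ : ρ ≠ 0 := by
    rintro rfl
    exact htr (trace_zero _ _)
  have hss : star s * s = 1 := star_mul_self_eq_one_of_mul_eq_smul hU1 hρ hs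
  refine ⟨hst, ?_, ?_⟩
  · have hsq : (‖s‖ : ℂ) ^ 2 = 1 := by rw [← Complex.conj_mul']; exact hss
    exact (pow_eq_one_iff_of_nonneg (norm_nonneg s) two_ne_zero).mp (by exact_mod_cast hsq)
  · calc t = (star s * s) * t := by rw [hss, one_mul]
      _ = star s * (s * t) := mul_assoc _ _ _
      _ = (starRingEnd ℂ) s := by rw [hst, mul_one]; rfl

/-- **Traceful eigenoperators of a strong symmetry lie in diagonal symmetry
sectors.** If `S` is unitary, `trace ρ ≠ 0`, `S·ρ = s • ρ`, and `ρ·Sᴴ = t • ρ`,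
then `s·t = 1`, `|s| = 1`, and `t = conj s`. -/
theorem traceful_eigenoperator_diagonal_sector (n : ℕ)
    (S ρ : Matrix (Fin n) (Fin n) ℂ)
    (hU1 : Sᴴ * S = 1) (hU2 : S * Sᴴ = 1)
    (htr : ρ.trace ≠ 0) (s t : ℂ)
    (hs : S * ρ = s • ρ) (ht : ρ * Sᴴ = t • ρ) :
    s * t = 1 ∧ ‖s‖ = 1 ∧ t = (starRingEnd ℂ) s :=
  traceful_eigenoperator_diagonal_sector_general n S ρ hU1 htr s t hs ht
end

section
/- Let R be a ring equipped with an algebra structure over ℂ, let m be a natural number, and let c : Fin m → R satisfy c_i · c_j + c_j · c_i = 2δ_{ij} • 1 for all i, j (Clifford anticommutation relations). Let O be a complex m×m matrix with O·Oᵀ = 1 and Oᵀ·O = 1 (a complex orthogonal matrix), and define a_i = Σ_j O_{ij} • c_j. Then: (a) a_i · a_j + a_j · a_i = 2δ_{ij} • 1 for all i, j; and (b) the ordered products satisfy a_1 · a_2 · ⋯ · a_m = det(O) • (c_1 · c_2 · ⋯ · c_m). -/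
open Matrix


section aux
variable {S : Type*} [Ring S]

theorem majAux_swapzero : ∀ (n : ℕ) (u : Fin (n+1) → S)
    (_ : ∀ i j, i ≠ j → u i * u j = -(u j * u i)) (p : Fin (n+1)), p ≠ 0 →
    u p * (List.ofFn fun i : Fin n => u (Equiv.swap 0 p i.succ)).prod
      = -(u 0 * (List.ofFn (u ∘ Fin.succ)).prod)
  | 0, u, h, p, hp => absurd (Fin.ext (Nat.lt_one_iff.mp p.isLt)) hp
  | n+1, u, h, p, hp => by
    obtain ⟨j, rfl⟩ : ∃ j : Fin (n+1), p = j.succ :=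
      ⟨p.pred hp, (Fin.succ_pred p hp).symm⟩
    rcases eq_or_ne j 0 with rfl | hj
    · -- p = 1
      rw [List.ofFn_succ, List.prod_cons, List.ofFn_succ (f := u ∘ Fin.succ), List.prod_cons]
      have h1 : Equiv.swap (0 : Fin (n+2)) ((0:Fin (n+1)).succ) ((0:Fin (n+1)).succ) = 0 :=
        Equiv.swap_apply_right _ _
      have h2 : (fun i : Fin n => u (Equiv.swap (0 : Fin (n+2)) ((0:Fin (n+1)).succ) i.succ.succ))
          = fun i : Fin n => u i.succ.succ := by
        funext i
        rw [Equiv.swap_apply_of_ne_of_ne (Fin.succ_ne_zero _)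
          (by rw [Fin.succ_zero_eq_one]; exact fun hh => Fin.succ_ne_zero i (by
            have := Fin.succ_injective _ (hh.trans (Fin.succ_zero_eq_one).symm); exact this))]
      rw [h1, h2]
      have hne : ((0:Fin (n+1)).succ : Fin (n+2)) ≠ 0 := Fin.succ_ne_zero _
      rw [← mul_assoc, ← mul_assoc, h _ _ hne, neg_mul]
      simp [Function.comp]
    · -- p = j.succ, j ≠ 0
      set emb : Fin (n+1) → Fin (n+2) := Fin.cases 0 (fun y => y.succ.succ) with hemb
      have hembz : emb 0 = 0 := rfl
      have hembs : ∀ x : Fin n, emb x.succ = x.succ.succ := fun x => by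
        simp [hemb]
      have hembinj : Function.Injective emb := by
        intro x y hxy
        induction x using Fin.cases with
        | zero =>
          induction y using Fin.cases with
          | zero => rfl
          | succ y => rw [hembz, hembs] at hxy; exact absurd hxy.symm (Fin.succ_ne_zero _)
        | succ x =>
          induction y using Fin.cases with
          | zero => rw [hembz, hembs] at hxy; exact absurd hxy (Fin.succ_ne_zero _)
          | succ y =>
            rw [hembs, hembs] at hxy
            exact congrArg Fin.succ (Fin.succ_injective _ (Fin.succ_injective _ hxy))
      have hembj : emb j = j.succ := by
        obtain ⟨k, rfl⟩ : ∃ k : Fin n, j = k.succ :=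
          ⟨j.pred hj, (Fin.succ_pred j hj).symm⟩
        exact hembs k
      have hU : ∀ i k, i ≠ k → (u ∘ emb) i * (u ∘ emb) k = -((u ∘ emb) k * (u ∘ emb) i) :=
        fun i k hik => h _ _ (fun hh => hik (hembinj hh))
      have IH := majAux_swapzero n (u ∘ emb) hU j hj
      have hfam : (fun i : Fin n => (u ∘ emb) (Equiv.swap 0 j i.succ))
          = fun i : Fin n => u (Equiv.swap 0 j.succ i.succ.succ) := by
        funext i
        have := hembinj.swap_apply (0 : Fin (n+1)) j i.succ
        rw [hembz, hembj, hembs] at this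
        simp only [Function.comp]
        rw [← this]
      rw [hfam] at IH
      have hUj : (u ∘ emb) j = u j.succ := by rw [Function.comp, hembj]
      have hU0 : (u ∘ emb) 0 = u 0 := rfl
      have hUs : ((u ∘ emb) ∘ Fin.succ) = fun i : Fin n => u i.succ.succ := by
        funext i; simp only [Function.comp]; rw [hembs]
      rw [hUj, hU0, hUs] at IH
      -- now unfold goal
      rw [List.ofFn_succ, List.prod_cons, List.ofFn_succ (f := u ∘ Fin.succ), List.prod_cons]
      have hhead : Equiv.swap (0 : Fin (n+2)) j.succ ((0:Fin (n+1)).succ) = (0:Fin (n+1)).succ := by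
        refine Equiv.swap_apply_of_ne_of_ne (Fin.succ_ne_zero _) ?_
        exact fun hh => hj (Fin.succ_injective _ hh.symm)
      rw [hhead]
      set Pv := (List.ofFn fun i : Fin n => u (Equiv.swap (0 : Fin (n+2)) j.succ i.succ.succ)).prod
      set Pu := (List.ofFn fun i : Fin n => (u ∘ Fin.succ) i.succ).prod with hPu
      have hPu' : Pu = (List.ofFn fun i : Fin n => u i.succ.succ).prod := by
        simp [hPu, Function.comp]
      have hone : ((0:Fin (n+1)).succ : Fin (n+2)) = 1 := Fin.succ_zero_eq_one
      have hjs1 : (j.succ : Fin (n+2)) ≠ 1 := by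
        rw [← Fin.succ_zero_eq_one]; exact fun hh => hj (Fin.succ_injective _ hh)
      calc u j.succ * (u (0:Fin (n+1)).succ * Pv)
          = (u j.succ * u (0:Fin (n+1)).succ) * Pv := by rw [mul_assoc]
        _ = -(u (0:Fin (n+1)).succ * u j.succ) * Pv := by
            rw [h _ _ (by rw [hone]; exact fun hh => hjs1 hh)]
        _ = -(u (0:Fin (n+1)).succ * (u j.succ * Pv)) := by rw [neg_mul, mul_assoc]
        _ = -(u (0:Fin (n+1)).succ * (-(u 0 * Pu))) := by rw [IH, hPu']
        _ = u (0:Fin (n+1)).succ * (u 0 * Pu) := by rw [mul_neg, neg_neg]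
        _ = (u (0:Fin (n+1)).succ * u 0) * Pu := by rw [mul_assoc]
        _ = -(u 0 * u (0:Fin (n+1)).succ) * Pu := by rw [h _ _ (Fin.succ_ne_zero _)]
        _ = -(u 0 * (u (0:Fin (n+1)).succ * Pu)) := by rw [neg_mul, mul_assoc]

end aux

section aux2
variable {S : Type*} [Ring S]

theorem majAux_perm : ∀ (n : ℕ) (u : Fin n → S)
    (_ : ∀ i j, i ≠ j → u i * u j = -(u j * u i)) (σ : Equiv.Perm (Fin n)),
    (List.ofFn fun i => u (σ i)).prod = Equiv.Perm.sign σ • (List.ofFn u).prod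
  | 0, u, h, σ => by
    have : σ = Equiv.refl _ := by ext x; exact x.elim0
    simp [this]
  | n+1, u, h, σ => by
    rcases hσ : Equiv.Perm.decomposeFin σ with ⟨p, e⟩
    have hσ' : σ = Equiv.Perm.decomposeFin.symm (p, e) := by
      rw [← hσ]; exact (Equiv.symm_apply_apply _ _).symm
    subst hσ'
    rw [List.ofFn_succ, List.prod_cons]
    simp only [Equiv.Perm.decomposeFin_symm_apply_zero, Equiv.Perm.decomposeFin_symm_apply_succ]
    set w : Fin n → S := fun i => u (Equiv.swap 0 p i.succ) with hw
    have hwinj : Function.Injective fun i : Fin n => Equiv.swap (0 : Fin (n+1)) p i.succ :=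
      (Equiv.injective _).comp (Fin.succ_injective _)
    have hwa : ∀ i j, i ≠ j → w i * w j = -(w j * w i) :=
      fun i j hij => h _ _ (fun hh => hij (hwinj hh))
    have IH := majAux_perm n w hwa e
    have : (List.ofFn fun i => u (Equiv.swap 0 p (e i).succ)).prod
        = Equiv.Perm.sign e • (List.ofFn w).prod := IH
    rw [this, mul_smul_comm, Equiv.Perm.decomposeFin.symm_sign]
    rcases eq_or_ne p 0 with rfl | hp
    · have hwu : w = u ∘ Fin.succ := by
        funext i; simp [hw, Equiv.swap_self]
      rw [hwu, if_pos rfl, one_mul]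
      congr 1
      rw [List.ofFn_succ (f := u), List.prod_cons]
      rfl
    · have := majAux_swapzero n u h p hp
      rw [← hw] at this
      rw [this, if_neg hp]
      have hofn : (List.ofFn u).prod = u 0 * (List.ofFn (u ∘ Fin.succ)).prod := by
        rw [List.ofFn_succ (f := u), List.prod_cons]
        rfl
      rw [hofn]
      rw [Units.smul_def, Units.smul_def]
      rw [Units.val_mul, Units.val_neg, Units.val_one, neg_one_mul, neg_smul, smul_neg]

end aux2

/-- **Complex orthogonal rotations of Majorana modes.**
If `c_1, …, c_m` satisfy the Clifford relations `c_i c_j + c_j c_i = 2δ_{ij}•1`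
and `O` is a complex orthogonal matrix, then the rotated modes
`a_i = Σ_j O_{ij} • c_j` satisfy the same Clifford relations, and the ordered
products satisfy `a_1 ⋯ a_m = det O • (c_1 ⋯ c_m)`. -/
theorem majorana_complex_orthogonal_rotation (R : Type) [Ring R] [Algebra ℂ R]
    (m : ℕ) (c : Fin m → R)
    (hc : ∀ i j, c i * c j + c j * c i
      = ((if i = j then 2 else 0 : ℂ)) • (1 : R))
    (O : Matrix (Fin m) (Fin m) ℂ)
    (hO1 : O * Oᵀ = 1) (hO2 : Oᵀ * O = 1)
    (a : Fin m → R) (ha : ∀ i, a i = ∑ j, O i j • c j) :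
    (∀ i j, a i * a j + a j * a i
        = ((if i = j then 2 else 0 : ℂ)) • (1 : R)) ∧
      (List.ofFn a).prod = O.det • (List.ofFn c).prod := by

  classical
  -- the linear map
  set γ : (Fin m → ℂ) →ₗ[ℂ] R :=
    { toFun := fun v => ∑ j, v j • c j
      map_add' := by intro x y; simp [add_smul, Finset.sum_add_distrib]
      map_smul' := by intro t x; simp [smul_smul, Finset.smul_sum] } with hγ
  have hγapp : ∀ v : Fin m → ℂ, γ v = ∑ j, v j • c j := fun v => rfl
  -- generalized anticommutation
  have hpoly : ∀ u v : Fin m → ℂ,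
      γ u * γ v + γ v * γ u = (2 * ∑ k, u k * v k) • (1 : R) := by
    intro u v
    have expand : ∀ u v : Fin m → ℂ,
        γ u * γ v = ∑ k, ∑ l, (u k * v l) • (c k * c l) := by
      intro u v
      rw [hγapp, hγapp, Finset.sum_mul_sum]
      exact Finset.sum_congr rfl fun k _ => Finset.sum_congr rfl fun l _ =>
        (smul_mul_smul_comm (u k) (c k) (v l) (c l)).symm ▸ rfl
    rw [expand, expand]
    have hswap : (∑ k : Fin m, ∑ l : Fin m, (v k * u l) • (c k * c l))
        = ∑ k : Fin m, ∑ l : Fin m, (v l * u k) • (c l * c k) := Finset.sum_comm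
    rw [hswap, ← Finset.sum_add_distrib]
    have : ∀ k, ((∑ l, (u k * v l) • (c k * c l)) + ∑ l, (v l * u k) • (c l * c k))
        = (u k * v k * 2) • (1:R) := by
      intro k
      rw [← Finset.sum_add_distrib]
      have : ∀ l, (u k * v l) • (c k * c l) + (v l * u k) • (c l * c k)
          = (u k * v l * (if k = l then 2 else 0)) • (1:R) := by
        intro l
        rw [mul_comm (v l) (u k), ← smul_add, hc, smul_smul]
      rw [Finset.sum_congr rfl fun l _ => this l]
      simp only [mul_ite, mul_zero, ite_smul, zero_smul]
      rw [Finset.sum_ite_eq Finset.univ k (fun l => (u k * v l * 2) • (1:R))]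
      simp
    rw [Finset.sum_congr rfl fun k _ => this k, ← Finset.sum_smul]
    congr 1
    rw [Finset.mul_sum]
    exact Finset.sum_congr rfl fun k _ => by ring
  -- rows
  have haγ : ∀ i, a i = γ (O i) := fun i => (ha i).trans (hγapp (O i)).symm
  have horow : ∀ i j, (2 * ∑ k, O i k * O j k : ℂ) = if i = j then 2 else 0 := by
    intro i j
    have h1 : (O * Oᵀ) i j = (1 : Matrix (Fin m) (Fin m) ℂ) i j := by rw [hO1]
    rw [Matrix.mul_apply] at h1
    simp only [Matrix.transpose_apply, Matrix.one_apply] at h1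
    rw [h1]
    split_ifs <;> norm_num
  have haC : ∀ i j, a i * a j + a j * a i = ((if i = j then 2 else 0 : ℂ)) • (1 : R) := by
    intro i j
    rw [haγ, haγ, hpoly, horow]
  -- pairwise anticommutation
  have hacomm : ∀ i j, i ≠ j → γ (O i) * γ (O j) = -(γ (O j) * γ (O i)) := by
    intro i j hij
    have := haC i j
    rw [if_neg hij, zero_smul] at this
    rw [haγ, haγ] at this
    exact eq_neg_of_add_eq_zero_left this
  set e : Fin m → (Fin m → ℂ) := fun i j => if i = j then 1 else 0 with he
  have hγe : ∀ i, γ (e i) = c i := by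
    intro i
    rw [hγapp]
    simp only [he, ite_smul, one_smul, zero_smul]
    rw [Finset.sum_ite_eq Finset.univ i (fun j => c j)]
    simp
  have hccomm : ∀ i j, i ≠ j → γ (e i) * γ (e j) = -(γ (e j) * γ (e i)) := by
    intro i j hij
    rw [hγe, hγe]
    have := hc i j
    rw [if_neg hij, zero_smul] at this
    exact eq_neg_of_add_eq_zero_left this
  set F : MultilinearMap ℂ (fun _ : Fin m => (Fin m → ℂ)) R :=
    (MultilinearMap.mkPiAlgebraFin ℂ m R).compLinearMap (fun _ => γ) with hF
  have hFapp : ∀ v : Fin m → (Fin m → ℂ), F v = (List.ofFn fun i => γ (v i)).prod := by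
    intro v
    rw [hF, MultilinearMap.compLinearMap_apply, MultilinearMap.mkPiAlgebraFin_apply]
  set G := MultilinearMap.alternatization F with hG
  have hGF : ∀ v : Fin m → (Fin m → ℂ),
      (∀ i j, i ≠ j → γ (v i) * γ (v j) = -(γ (v j) * γ (v i))) →
      G v = Nat.factorial m • F v := by
    intro v hv
    rw [hG, MultilinearMap.alternatization_apply]
    have hterm : ∀ σ : Equiv.Perm (Fin m),
        Equiv.Perm.sign σ • F.domDomCongr σ v = F v := by
      intro σ
      rw [MultilinearMap.domDomCongr_apply]
      have h1 : F (fun i => v (σ i)) = Equiv.Perm.sign σ • F v := by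
        rw [hFapp, hFapp]
        exact majAux_perm m (fun i => γ (v i)) hv σ
      rw [h1, smul_smul, Int.units_mul_self, one_smul]
    rw [Finset.sum_congr rfl fun σ _ => hterm σ]
    rw [Finset.sum_const, Finset.card_univ, Fintype.card_perm, Fintype.card_fin]
  have hperm : ∀ σ : Equiv.Perm (Fin m), G (fun i => e (σ i)) = Equiv.Perm.sign σ • G e :=
    fun σ => G.map_perm e σ
  have hGrows : G (fun i => O i) = O.det • G e := by
    have h0 : G (fun i => O i)
        = ∑ f : Fin m → Fin m, (∏ i, O i (f i)) • G (fun i => e (f i)) := by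
      have hexp : (fun i : Fin m => O i) = (fun i => ∑ j, O i j • e j) :=
        funext fun i => pi_eq_sum_univ (O i)
      rw [hexp]
      have hms := G.toMultilinearMap.map_sum (g := fun i j => O i j • e j)
      rw [AlternatingMap.coe_multilinearMap] at hms
      rw [hms]
      refine Finset.sum_congr rfl fun f _ => ?_
      have hsm := G.toMultilinearMap.map_smul_univ (fun i => O i (f i)) (fun i => e (f i))
      rw [AlternatingMap.coe_multilinearMap] at hsm
      exact hsm
    rw [h0]
    have hzero : ∀ f : Fin m → Fin m, ¬Function.Injective f →
        (∏ i, O i (f i)) • G (fun i => e (f i)) = 0 := by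
      intro f hf
      have hz : G (fun i => e (f i)) = 0 := by
        apply AlternatingMap.map_eq_zero_of_not_injective
        intro hinj
        apply hf
        intro x y hxy
        have : e (f x) = e (f y) := by rw [hxy]
        exact hinj this
      rw [hz, smul_zero]
    have himg : (∑ f : Fin m → Fin m, (∏ i, O i (f i)) • G (fun i => e (f i)))
        = ∑ σ : Equiv.Perm (Fin m), (∏ i, O i (σ i)) • G (fun i => e (σ i)) := by
      rw [← Finset.sum_image (g := fun σ : Equiv.Perm (Fin m) => ⇑σ)
        (f := fun f : Fin m → Fin m => (∏ i, O i (f i)) • G (fun i => e (f i)))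
        (fun σ _ τ _ h => Equiv.coe_fn_injective h)]
      apply (Finset.sum_subset (Finset.subset_univ _) ?_).symm
      intro f _ hf
      apply hzero
      intro hinj
      exact hf (Finset.mem_image.mpr
        ⟨Equiv.ofBijective f (Finite.injective_iff_bijective.mp hinj), Finset.mem_univ _, rfl⟩)
    rw [himg]
    have hterm : ∀ σ : Equiv.Perm (Fin m),
        (∏ i, O i (σ i)) • G (fun i => e (σ i))
          = ((∏ i, O i (σ i)) * (((Equiv.Perm.sign σ : ℤ) : ℂ))) • G e := by
      intro σ
      rw [hperm σ, Units.smul_def, ← Int.cast_smul_eq_zsmul ℂ, smul_smul]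
    rw [Finset.sum_congr rfl fun σ _ => hterm σ, ← Finset.sum_smul]
    congr 1
    rw [← Matrix.det_transpose O, Matrix.det_apply']
    exact Finset.sum_congr rfl fun σ _ => by
      simp only [Matrix.transpose_apply]
      ring
  have hmc : ((Nat.factorial m : ℂ)) ≠ 0 := Nat.cast_ne_zero.mpr (Nat.factorial_ne_zero m)
  have hns : ∀ x : R, (Nat.factorial m) • x = ((Nat.factorial m : ℂ)) • x :=
    fun x => (Nat.cast_smul_eq_nsmul ℂ _ _).symm
  have hmain : F (fun i => O i) = O.det • F e := by
    have h1 : G (fun i => O i) = Nat.factorial m • F (fun i => O i) := hGF _ hacomm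
    have h2 : G e = Nat.factorial m • F e := hGF _ hccomm
    rw [h1, h2, hns, hns] at hGrows
    rw [smul_smul, mul_comm, ← smul_smul] at hGrows
    have := congrArg (fun z : R => ((Nat.factorial m : ℂ))⁻¹ • z) hGrows
    simpa [inv_smul_smul₀ hmc] using this
  refine ⟨haC, ?_⟩
  have hl : F (fun i => O i) = (List.ofFn a).prod := by
    rw [hFapp]
    have hfa : (fun i => γ (O i)) = a := funext fun i => (haγ i).symm
    rw [hfa]
  have hr : F e = (List.ofFn c).prod := by
    rw [hFapp]
    have hfc : (fun i => γ (e i)) = c := funext fun i => hγe i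
    rw [hfc]
  rw [← hl, ← hr, hmain]
end
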